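/- Let H be a subgroup of the symmetric group of a finite set Δ acting transitively on Δ with |Δ| ≥ 2, and let K be a subgroup of the symmetric group of a nonempty finite set Γ. Let W be the subgroup of the symmetric group of the set Fun(Γ, Δ) of all functions from Γ to Δ consisting of all permutations π for which there exist σ ∈ K and h : Γ → H such that (π(f))(γ) = h(γ) • f(σ⁻¹ • γ) for every f : Γ → Δ and every γ ∈ Γ (the wreath product H ≀ K in product action). Then for every subgroup G ≤ W acting transitively on Fun(Γ, Δ) one has m(G) ≤ m(H)^{|Γ|}. -/

import Mathlib

open Pointwise

/-- A subset `A` of `Ω` is *non-self-separable* for the action of `G` if every translate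
`g • A` meets `A`. -/
def NonSelfSep (G : Type*) [Group G] {Ω : Type*} [MulAction G Ω] (A : Set Ω) : Prop :=
  ∀ g : G, (A ∩ g • A).Nonempty

/-- `mParam G Ω` is the minimum cardinality of a non-self-separable subset of `Ω`. -/
noncomputable def mParam (G Ω : Type*) [Group G] [MulAction G Ω] : ℕ :=
  sInf {k | ∃ A : Set Ω, A.ncard = k ∧ NonSelfSep G A}

/-!
Take a non-self-separable `A ⊆ Δ` of size `m(H)` and the box `A^Γ ⊆ Fun(Γ, Δ)`, of size
`m(H)^|Γ|`. An element `f ↦ (γ ↦ h(γ) (f (σ⁻¹ γ)))` of `H ≀ K` acts on the box coordinate by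
coordinate: for each `γ` pick `x_γ ∈ A` with `h(γ) x_γ ∈ A`; then `f := x ∘ σ` lies in the box
and so does its image. Hence the box is non-self-separable for every `G ≤ H ≀ K`.
-/

open Set

section NonSelfSep

variable {G Ω : Type*} [Group G] [MulAction G Ω]

theorem NonSelfSep.exists_mem_smul_mem {A : Set Ω} (hA : NonSelfSep G A) (g : G) :
    ∃ x ∈ A, g • x ∈ A := by
  obtain ⟨_, hy, x, hx, rfl⟩ := hA g
  exact ⟨x, hx, hy⟩

theorem nonSelfSep_univ [Nonempty Ω] : NonSelfSep G (univ : Set Ω) := fun g => by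
  simp [smul_set_univ]

theorem mParam_le_ncard {A : Set Ω} (hA : NonSelfSep G A) : mParam G Ω ≤ A.ncard :=
  Nat.sInf_le ⟨A, rfl, hA⟩

theorem exists_nonSelfSep_ncard_eq_mParam [Nonempty Ω] :
    ∃ A : Set Ω, A.ncard = mParam G Ω ∧ NonSelfSep G A :=
  Nat.sInf_mem (s := {k | ∃ A : Set Ω, A.ncard = k ∧ NonSelfSep G A})
    ⟨_, univ, rfl, nonSelfSep_univ⟩

end NonSelfSep

theorem ncard_univ_pi_const {Γ Δ : Type*} [Fintype Γ] (A : Set Δ) :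
    (univ.pi fun _ : Γ => A).ncard = A.ncard ^ Fintype.card Γ := by
  simp [Set.ncard, Finset.prod_const, ← ENat.coe_toNatHom, map_pow]

theorem exists_mem_univ_pi_apply_mem_univ_pi {Γ Δ : Type*} {H : Subgroup (Equiv.Perm Δ)}
    {A : Set Δ} (hA : NonSelfSep H A) {π : Equiv.Perm (Γ → Δ)} (σ : Equiv.Perm Γ)
    (h : Γ → Equiv.Perm Δ) (hH : ∀ γ, h γ ∈ H) (hπ : ∀ f γ, π f γ = h γ (f (σ⁻¹ γ))) :
    ∃ f ∈ univ.pi (fun _ => A), π f ∈ univ.pi (fun _ => A) := by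
  choose x hxA hhxA using fun γ => hA.exists_mem_smul_mem ⟨h γ, hH γ⟩
  refine ⟨x ∘ σ, fun γ _ => hxA (σ γ), fun γ _ => ?_⟩
  rw [hπ, Function.comp_apply, ← Equiv.Perm.mul_apply, mul_inv_cancel, Equiv.Perm.one_apply]
  exact hhxA γ

theorem nonSelfSep_univ_pi_of_le_wreath {Γ Δ : Type*} {H : Subgroup (Equiv.Perm Δ)}
    {A : Set Δ} (hA : NonSelfSep H A) {G : Subgroup (Equiv.Perm (Γ → Δ))}
    (hGW : ∀ π ∈ G, ∃ σ : Equiv.Perm Γ, ∃ h : Γ → Equiv.Perm Δ, (∀ γ, h γ ∈ H) ∧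
      ∀ (f : Γ → Δ) (γ : Γ), π f γ = h γ (f (σ⁻¹ γ))) :
    NonSelfSep G (univ.pi fun _ : Γ => A) := by
  intro π
  obtain ⟨σ, h, hH, hπ⟩ := hGW π π.2
  obtain ⟨f, hf, hπf⟩ := exists_mem_univ_pi_apply_mem_univ_pi hA σ h hH hπ
  exact ⟨π • f, hπf, smul_mem_smul_set hf⟩

theorem stmt6_general (Δ Γ : Type*) [Fintype Δ] [Fintype Γ]
    (hΔ : 2 ≤ Fintype.card Δ)
    (H : Subgroup (Equiv.Perm Δ))
    (K : Subgroup (Equiv.Perm Γ))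
    (G : Subgroup (Equiv.Perm (Γ → Δ)))
    (hGW : ∀ π ∈ G, ∃ σ ∈ K, ∃ h : Γ → Equiv.Perm Δ, (∀ γ, h γ ∈ H) ∧
      ∀ (f : Γ → Δ) (γ : Γ), π f γ = h γ (f (σ⁻¹ γ))) :
    mParam G (Γ → Δ) ≤ mParam H Δ ^ Fintype.card Γ := by
  have : Nonempty Δ := Fintype.card_pos_iff.mp (by omega)
  obtain ⟨A, hAcard, hA⟩ := exists_nonSelfSep_ncard_eq_mParam (G := H) (Ω := Δ)
  have hbox := nonSelfSep_univ_pi_of_le_wreath hA fun π hπ =>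
    (hGW π hπ).imp fun _ ⟨_, hσ⟩ => hσ
  calc mParam G (Γ → Δ) ≤ (univ.pi fun _ : Γ => A).ncard := mParam_le_ncard hbox
    _ = mParam H Δ ^ Fintype.card Γ := by rw [ncard_univ_pi_const, hAcard]

/-- Let `H` be a transitive subgroup of `Sym(Δ)` with `|Δ| ≥ 2`, and `K`
a subgroup of `Sym(Γ)` with `Γ` finite and nonempty.  If `G` is a transitive subgroup of
`Sym(Fun(Γ, Δ))` all of whose elements have the form `f ↦ (γ ↦ h(γ) (f (σ⁻¹ γ)))` with
`σ ∈ K` and `h : Γ → H` (i.e. `G` is contained in the wreath product `H ≀ K` in product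
action), then `m(G) ≤ m(H) ^ |Γ|`. -/
theorem stmt6 (Δ Γ : Type*) [Fintype Δ] [Fintype Γ] [Nonempty Γ]
    (hΔ : 2 ≤ Fintype.card Δ)
    (H : Subgroup (Equiv.Perm Δ)) (hH : MulAction.IsPretransitive H Δ)
    (K : Subgroup (Equiv.Perm Γ))
    (G : Subgroup (Equiv.Perm (Γ → Δ)))
    (hGW : ∀ π ∈ G, ∃ σ ∈ K, ∃ h : Γ → Equiv.Perm Δ, (∀ γ, h γ ∈ H) ∧
      ∀ (f : Γ → Δ) (γ : Γ), π f γ = h γ (f (σ⁻¹ γ)))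
    (hG : MulAction.IsPretransitive G (Γ → Δ)) :
    mParam G (Γ → Δ) ≤ mParam H Δ ^ Fintype.card Γ :=
  stmt6_general Δ Γ hΔ H K G hGW
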